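/- arXiv:math-ph/0410053 — 2 statements merged into one kernel-verified Lean document; each statement's English description precedes it below -/
import Mathlib

section
/- Let f : ℕ → ℝ be bounded, 0 ≤ f(x) ≤ C for all x, satisfying f(x) = Σ_{y=0}^{x} f(x-y) q_x(y) for all x, where each q_x is a probability measure on the nonnegative integers. Assume: (i) (compactness) for every ε > 0 there exists K(ε) with Σ_{y=0}^{K(ε)} q_x(y) ≥ 1 - ε uniformly in x; (ii) (lower bound) for every T there exists X(T) < ∞ such that F_T := inf_{x ≥ X(T)} inf_{1 ≤ y ≤ T} q_x(y) > 0. Let M = limsup_{x→∞} f(x). Then for every T ∈ ℕ and every ε > 0 there exists K₁ such that min_{x ∈ [K₁, K₁+T]} f(x) ≥ M - ε. -/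
/-!
Choose `x` far out with `f x` within `δ` of `M = limsup f`, and so late that `f ≤ M + δ` on the
window `[x - K, x]`, where `K` is large enough that `q x` puts mass at most `η` beyond `K`.
The equation `f x = ∑ f (x - y) q x y` is then an average of values at most `M + δ`, up to a tail
of size `C η`; a value `f (x - y₀) < M - ε` with `1 ≤ y₀ ≤ T` carries weight at least `F`, which
pulls the average down by about `ε F`. Taking `δ, η` small compared with `ε F` this contradicts
`f x > M - δ`, so `f ≥ M - ε` on `[x - T, x]`.
-/

open Filter Finset

theorem sum_le_one_of_tsum_eq_one {ι : Type*} {w : ι → ℝ} (hw0 : ∀ i, 0 ≤ w i)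
    (hw1 : ∑' i, w i = 1) (s : Finset ι) : ∑ i ∈ s, w i ≤ 1 := by
  have hw : Summable w := by
    by_contra h
    rw [tsum_eq_zero_of_not_summable h] at hw1
    exact zero_ne_one hw1
  exact hw1 ▸ hw.sum_le_tsum s fun i _ => hw0 i

theorem sum_Ico_le_of_sub_le_sum_range {w : ℕ → ℝ} {η : ℝ} {K m n : ℕ} (hw0 : ∀ y, 0 ≤ w y)
    (hw1 : ∑ y ∈ range n, w y ≤ 1) (hK : 1 - η ≤ ∑ y ∈ range K, w y) (hKm : K ≤ m)
    (hmn : m ≤ n) : ∑ y ∈ Ico m n, w y ≤ η := by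
  have hmono : ∑ y ∈ range K, w y ≤ ∑ y ∈ range m, w y :=
    sum_le_sum_of_subset_of_nonneg (range_subset_range.mpr hKm) fun y _ _ => hw0 y
  rw [sum_Ico_eq_sub _ hmn]
  linarith

theorem sum_mul_le_sub_mul {ι : Type*} [DecidableEq ι] {s : Finset ι} {g w : ι → ℝ} {A : ℝ}
    (hA : 0 ≤ A) (hw0 : ∀ i ∈ s, 0 ≤ w i) (hw1 : ∑ i ∈ s, w i ≤ 1) (hgA : ∀ i ∈ s, g i ≤ A)
    {i₀ : ι} (hi₀ : i₀ ∈ s) : ∑ i ∈ s, g i * w i ≤ A - (A - g i₀) * w i₀ := by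
  have hrest : ∑ i ∈ s.erase i₀, g i * w i ≤ A * ∑ i ∈ s.erase i₀, w i := by
    rw [mul_sum]
    exact sum_le_sum fun i hi =>
      mul_le_mul_of_nonneg_right (hgA i (mem_of_mem_erase hi)) (hw0 i (mem_of_mem_erase hi))
  have hmass : w i₀ + ∑ i ∈ s.erase i₀, w i ≤ 1 := by rwa [add_sum_erase _ _ hi₀]
  rw [← add_sum_erase _ _ hi₀]
  nlinarith [mul_le_mul_of_nonneg_left hmass hA]

theorem sum_range_mul_le {g w : ℕ → ℝ} {A C η : ℝ} {K n y₀ : ℕ} (hKn : K ≤ n)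
    (hA : 0 ≤ A) (hC : 0 ≤ C) (hw0 : ∀ y, 0 ≤ w y) (hw1 : ∑ y ∈ range n, w y ≤ 1)
    (htail : ∑ y ∈ Ico K n, w y ≤ η) (hgA : ∀ y < K, g y ≤ A) (hgC : ∀ y, g y ≤ C)
    (hy₀ : y₀ < K) : ∑ y ∈ range n, g y * w y ≤ A - (A - g y₀) * w y₀ + C * η := by
  have hhead : ∑ y ∈ range K, g y * w y ≤ A - (A - g y₀) * w y₀ := by
    refine sum_mul_le_sub_mul hA (fun y _ => hw0 y) ?_ (fun y hy => hgA y (mem_range.mp hy))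
      (mem_range.mpr hy₀)
    exact (sum_le_sum_of_subset_of_nonneg (range_subset_range.mpr hKn) fun y _ _ => hw0 y).trans
      hw1
  have htail' : ∑ y ∈ Ico K n, g y * w y ≤ C * η :=
    calc ∑ y ∈ Ico K n, g y * w y ≤ ∑ y ∈ Ico K n, C * w y :=
          sum_le_sum fun y _ => mul_le_mul_of_nonneg_right (hgC y) (hw0 y)
      _ = C * ∑ y ∈ Ico K n, w y := (mul_sum _ _ _).symm
      _ ≤ C * η := mul_le_mul_of_nonneg_left htail hC
  rw [← sum_range_add_sum_Ico _ hKn]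
  linarith

theorem sub_le_of_lt_of_le_sub_mul {M δ ε η C F u v w : ℝ} (hδ : 0 ≤ δ) (hε : 0 < ε)
    (hF : 0 ≤ F) (hFw : F ≤ w) (hbudget : 2 * δ + C * η ≤ ε * F) (hu : M - δ < u)
    (hbound : u ≤ M + δ - (M + δ - v) * w + C * η) : M - ε ≤ v := by
  by_contra! hv
  have hloss : ε * F ≤ (M + δ - v) * w :=
    (mul_le_mul_of_nonneg_left hFw hε.le).trans
      (mul_le_mul_of_nonneg_right (by linarith) (hF.trans hFw))
  linarith

theorem exists_near_limsup_of_bounded {f : ℕ → ℝ} (hbdd : IsBoundedUnder (· ≤ ·) atTop f)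
    (hcobdd : IsCoboundedUnder (· ≤ ·) atTop f) {δ : ℝ} (hδ : 0 < δ) (N₀ K : ℕ) :
    ∃ x ≥ N₀, limsup f atTop - δ < f x ∧ ∀ y ≤ K, f (x - y) < limsup f atTop + δ := by
  obtain ⟨N, hN⟩ := eventually_atTop.mp <|
    eventually_lt_of_limsup_lt (lt_add_of_pos_right _ hδ) hbdd
  obtain ⟨x, hx, hfx⟩ := frequently_atTop.mp
    (frequently_lt_of_lt_limsup hcobdd (sub_lt_self _ hδ)) (max N₀ (N + K))
  exact ⟨x, le_of_max_le_left hx, hfx, fun y hy => hN _ (by omega)⟩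

theorem exists_error_budget {ε F C : ℝ} (hε : 0 < ε) (hF : 0 < F) (hC : 0 ≤ C) :
    ∃ δ η : ℝ, 0 < δ ∧ δ ≤ ε ∧ 0 < η ∧ 2 * δ + C * η ≤ ε * F := by
  have hδF : ε * min F 1 ≤ ε * F := mul_le_mul_of_nonneg_left (min_le_left F 1) hε.le
  have hδ1 : ε * min F 1 ≤ ε * 1 := mul_le_mul_of_nonneg_left (min_le_right F 1) hε.le
  have hη : (C + 1) * (ε * F / (2 * (C + 1))) = ε * F / 2 := by field_simp
  refine ⟨ε * min F 1 / 4, ε * F / (2 * (C + 1)), by positivity, by linarith, by positivity, ?_⟩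
  nlinarith [(by positivity : 0 ≤ ε * F / (2 * (C + 1)))]

/-- Flattening lemma: a bounded nonnegative solution of the discrete
self-averaging equation with tight kernels having uniform lower bounds
comes within `ε` of its limsup on arbitrarily long segments. -/
theorem stmt2
    (f : ℕ → ℝ) (q : ℕ → ℕ → ℝ) (C : ℝ)
    (hf0 : ∀ x, 0 ≤ f x) (hfC : ∀ x, f x ≤ C)
    (hq0 : ∀ x y, 0 ≤ q x y) (hq1 : ∀ x, ∑' y : ℕ, q x y = 1)
    (heq : ∀ x, f x = ∑ y ∈ Finset.range (x + 1), f (x - y) * q x y)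
    (hcompact : ∀ ε : ℝ, 0 < ε → ∃ K : ℕ, ∀ x,
      1 - ε ≤ ∑ y ∈ Finset.range (K + 1), q x y)
    (hlower : ∀ T : ℕ, ∃ X : ℕ, ∃ F : ℝ, 0 < F ∧
      ∀ x, X ≤ x → ∀ y, 1 ≤ y → y ≤ T → F ≤ q x y)
    (M : ℝ) (hM : M = Filter.limsup f Filter.atTop) :
    ∀ T : ℕ, ∀ ε : ℝ, 0 < ε → ∃ K₁ : ℕ, ∀ x, K₁ ≤ x → x ≤ K₁ + T → M - ε ≤ f x := by
  intro T ε hε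
  obtain ⟨X, F, hF, hFq⟩ := hlower T
  have hC : 0 ≤ C := (hf0 0).trans (hfC 0)
  have hM0 : 0 ≤ M := hM ▸ le_limsup_of_frequently_le (.of_forall hf0) (isBoundedUnder_of ⟨C, hfC⟩)
  have hq1' x := sum_le_one_of_tsum_eq_one (hq0 x) (hq1 x)
  obtain ⟨δ, η, hδ, hδε, hη, hbudget⟩ := exists_error_budget hε hF hC
  obtain ⟨K, hK⟩ := hcompact η hη
  obtain ⟨x, hx, hfx, hwindow⟩ := exists_near_limsup_of_bounded (isBoundedUnder_of ⟨C, hfC⟩)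
    (isBoundedUnder_of ⟨0, hf0⟩).isCoboundedUnder_le hδ (max X (max K T)) (max K T)
  rw [← hM] at hfx hwindow
  have hdip : ∀ y, 1 ≤ y → y ≤ T → M - ε ≤ f (x - y) := fun y hy1 hyT =>
    sub_le_of_lt_of_le_sub_mul hδ.le hε hF.le (hFq x (by omega) y hy1 hyT) hbudget hfx <|
      heq x ▸ sum_range_mul_le (by omega) (by positivity) hC (hq0 x) (hq1' x _)
        (sum_Ico_le_of_sub_le_sum_range (hq0 x) (hq1' x _) (hK x)
          (by omega : K + 1 ≤ max K T + 1) (by omega))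
        (fun y hy => (hwindow y (by omega)).le) (fun y => hfC _) (by omega)
  refine ⟨x - T, fun z hz1 hz2 => ?_⟩
  obtain rfl | hzx := (show z ≤ x by omega).eq_or_lt
  · linarith
  · simpa [Nat.sub_sub_self hzx.le] using hdip (x - z) (by omega) (by omega)
end

section
/- Under the hypotheses of the flattening lemma, fix T ∈ ℕ and ε > 0 with ε < F_T·(desired smallness). For δ > 0 small, suppose f(x) < M + δ for all x > S(δ), Σ_{x ≥ R - S} q_y(x) < δ for all y ≥ R, and there is a point y > R + T with f(y) > M - δ. Let A = {x ∈ [y-T, y] : f(x) < M - ε} and a = Σ_{t : y - t ∈ A} q_y(t). Then a < (2+C)δ / (ε + δ). -/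
/-!
Expand `f y = ∑ₜ f (y - t) q_y(t)`. Each lag `t` contributes at most `M - ε` if `y - t` is bad, at
most `M + δ` if `t < R - S` (then `y - t > S`), and at most `C` otherwise, on lags of
total `q_y`-mass below `δ`. Hence `M - δ < f y ≤ (M + δ) - (ε + δ) a + C δ`, i.e. `(ε + δ) a < (2 + C) δ`.
-/

open Finset

lemma summable_of_tsum_eq_one {α : Type*} {q : α → ℝ} (hq1 : ∑' t, q t = 1) : Summable q := by
  by_contra h
  simp [tsum_eq_zero_of_not_summable h] at hq1

lemma sum_ite_le_tsum_ite {α : Type*} {q : α → ℝ} (hq0 : ∀ t, 0 ≤ q t) (hq : Summable q)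
    (p : α → Prop) [DecidablePred p] (s : Finset α) :
    ∑ t ∈ s, (if p t then q t else 0) ≤ ∑' t, if p t then q t else 0 := by
  have hnonneg : ∀ t, 0 ≤ if p t then q t else 0 := fun t => by split_ifs <;> simp [hq0]
  have hle : ∀ t, (if p t then q t else 0) ≤ q t := fun t => by split_ifs <;> simp [hq0]
  exact (hq.of_nonneg_of_le hnonneg hle).sum_le_tsum s fun t _ => hnonneg t

theorem sum_mul_le_of_le_sub_ite_add_ite {α : Type*} [DecidableEq α] {q g : α → ℝ}
    {s B : Finset α} {p : α → Prop} [DecidablePred p] {U D C : ℝ}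
    (hq0 : ∀ t, 0 ≤ q t) (hq1 : ∑' t, q t = 1) (hU : 0 ≤ U) (hC : 0 ≤ C) (hB : B ⊆ s)
    (hg : ∀ t ∈ s, g t ≤ U - (if t ∈ B then D else 0) + (if p t then C else 0)) :
    ∑ t ∈ s, g t * q t ≤ U - D * ∑ t ∈ B, q t + C * ∑' t, if p t then q t else 0 := by
  have hq := summable_of_tsum_eq_one hq1
  have hmass : ∑ t ∈ s, q t ≤ 1 := hq1 ▸ hq.sum_le_tsum s fun t _ => hq0 t
  have htail := sum_ite_le_tsum_ite hq0 hq p s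
  calc ∑ t ∈ s, g t * q t
      ≤ ∑ t ∈ s, (U * q t - D * (if t ∈ B then q t else 0) + C * (if p t then q t else 0)) := by
        refine sum_le_sum fun t ht => ?_
        have := mul_le_mul_of_nonneg_right (hg t ht) (hq0 t)
        split_ifs at this ⊢ <;> linarith
    _ = U * ∑ t ∈ s, q t - D * ∑ t ∈ B, q t + C * ∑ t ∈ s, (if p t then q t else 0) := by
        rw [sum_add_distrib, sum_sub_distrib, ← mul_sum, ← mul_sum, ← mul_sum, sum_ite_mem,
          inter_eq_right.mpr hB]
    _ ≤ U - D * ∑ t ∈ B, q t + C * ∑' t, if p t then q t else 0 := by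
        nlinarith [mul_le_mul_of_nonneg_left hmass hU, mul_le_mul_of_nonneg_left htail hC]

/-- The lags `t` with `y - t` in the bad set `A = {x ∈ [y - T, y] : f x < M - ε}`. -/
noncomputable def badLags (f : ℕ → ℝ) (M ε : ℝ) (y T : ℕ) : Finset ℕ :=
  (range (T + 1)).filter fun t => f (y - t) < M - ε

lemma apply_sub_le_of_badLags {f : ℕ → ℝ} {C M ε δ : ℝ} {T S R y : ℕ}
    (hfC : ∀ x, f x ≤ C) (hS : ∀ x, S < x → f x < M + δ) (hC : 0 ≤ C) (hMδ : 0 ≤ M + δ)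
    (hRy : R ≤ y) (t : ℕ) :
    f (y - t) ≤ M + δ - (if t ∈ badLags f M ε y T then ε + δ else 0)
      + (if R - S ≤ t then C else 0) := by
  by_cases hA : t ∈ badLags f M ε y T
  · have hbad : f (y - t) < M - ε := (mem_filter.mp hA).2
    split_ifs <;> linarith
  · by_cases hL : R - S ≤ t
    · simp only [if_neg hA, if_pos hL]
      linarith [hfC (y - t)]
    · simp only [if_neg hA, if_neg hL]
      linarith [hS (y - t) (by omega)]

theorem stmt3_general
    (f : ℕ → ℝ) (q : ℕ → ℕ → ℝ) (C M ε δ : ℝ) (T S R y : ℕ)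
    (hf0 : ∀ x, 0 ≤ f x) (hfC : ∀ x, f x ≤ C)
    (hq0 : ∀ x t, 0 ≤ q x t) (hq1 : ∀ x, ∑' t : ℕ, q x t = 1)
    (heq : ∀ x, f x = ∑ t ∈ Finset.range (x + 1), f (x - t) * q x t)
    (hε : 0 < ε) (hδ : 0 < δ)
    (hS : ∀ x, S < x → f x < M + δ)
    (htail : ∀ z, R ≤ z → (∑' t : ℕ, if R - S ≤ t then q z t else 0) < δ)
    (hy : R + T < y) (hfy : M - δ < f y)
    (a : ℝ)
    (ha : a = ∑ t ∈ Finset.range (T + 1), if f (y - t) < M - ε then q y t else 0) :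
    a < (2 + C) * δ / (ε + δ) := by
  have hC : 0 ≤ C := (hf0 0).trans (hfC 0)
  have hMδ : 0 ≤ M + δ := (hf0 (S + 1)).trans (hS _ S.lt_succ_self).le
  have ha' : a = ∑ t ∈ badLags f M ε y T, q y t := by rw [ha, badLags, sum_filter]
  have hfy_le : f y ≤ M + δ - (ε + δ) * a + C * ∑' t, if R - S ≤ t then q y t else 0 := by
    rw [heq y, ha']
    exact sum_mul_le_of_le_sub_ite_add_ite (hq0 y) (hq1 y) hMδ hC
      ((filter_subset _ _).trans (range_subset_range.mpr (by omega)))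
      fun t _ => apply_sub_le_of_badLags hfC hS hC hMδ (by omega) t
  have htail_y := mul_le_mul_of_nonneg_left (htail y (by omega)).le hC
  rw [lt_div_iff₀ (by positivity)]
  linarith

/-- Key computation in the flattening lemma: the kernel mass `a` of the bad set
`A = {x ∈ [y-T, y] : f x < M - ε}` near a point `y` with `f y > M - δ`
is bounded by `(2+C)δ/(ε+δ)`. -/
theorem stmt3
    (f : ℕ → ℝ) (q : ℕ → ℕ → ℝ) (C M ε δ : ℝ) (T S R y : ℕ)
    (hf0 : ∀ x, 0 ≤ f x) (hfC : ∀ x, f x ≤ C)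
    (hq0 : ∀ x t, 0 ≤ q x t) (hq1 : ∀ x, ∑' t : ℕ, q x t = 1)
    (heq : ∀ x, f x = ∑ t ∈ Finset.range (x + 1), f (x - t) * q x t)
    (hM : M = Filter.limsup f Filter.atTop)
    (hε : 0 < ε) (hδ : 0 < δ)
    (hSR : S < R)
    (hS : ∀ x, S < x → f x < M + δ)
    (htail : ∀ z, R ≤ z → (∑' t : ℕ, if R - S ≤ t then q z t else 0) < δ)
    (hy : R + T < y) (hfy : M - δ < f y)
    (a : ℝ)
    (ha : a = ∑ t ∈ Finset.range (T + 1), if f (y - t) < M - ε then q y t else 0) :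
    a < (2 + C) * δ / (ε + δ) :=
  stmt3_general f q C M ε δ T S R y hf0 hfC hq0 hq1 heq hε hδ hS htail hy hfy a ha
end
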